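/- In R = 𝔽₂[t₁,t₂,t₃], write ρ_a = Σ_{i∈a} t_i for nonempty a ⊆ {1,2,3}. Consider the five quadruples A₁ = (ρ₁, ρ₂, ρ₁₂, ρ₃), A₂ = (ρ₁, ρ₂, ρ₁₂, ρ₁₃), A₃ = (ρ₁, ρ₂, ρ₁₂, ρ₂₃), A₄ = (ρ₁, ρ₂, ρ₁₂, ρ₁₂₃), A₅ = (ρ₃, ρ₁₃, ρ₂₃, ρ₁₂₃). Then for every symmetric polynomial f over 𝔽₂ in 4 variables, the element Σ_{i=1}^{5} f(A_i)/σ₄(A_i) of the field of fractions K of R lies in the image of R in K. -/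

import Mathlib

open MvPolynomial

noncomputable section

/-- The polynomial ring `R = 𝔽₂[t₁,t₂,t₃]`. -/
abbrev R3 : Type := MvPolynomial (Fin 3) (ZMod 2)

/-- The field of fractions `K` of `R`. -/
abbrev K3 : Type := FractionRing R3

/-- The canonical map `R → K`. -/
def toK3 : R3 →+* K3 := algebraMap _ _

/-- `ρ₁ = t₁`. -/ def r1 : R3 := X 0
/-- `ρ₂ = t₂`. -/ def r2 : R3 := X 1
/-- `ρ₃ = t₃`. -/ def r3 : R3 := X 2
/-- `ρ₁₂ = t₁ + t₂`. -/ def r12 : R3 := X 0 + X 1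
/-- `ρ₁₃ = t₁ + t₃`. -/ def r13 : R3 := X 0 + X 2
/-- `ρ₂₃ = t₂ + t₃`. -/ def r23 : R3 := X 1 + X 2
/-- `ρ₁₂₃ = t₁ + t₂ + t₃`. -/ def r123 : R3 := X 0 + X 1 + X 2

/-- The localization term `f(A)/σ₄(A)` in `K` attached to a quadruple `A` of
elements of `R` and a polynomial `f` in 4 variables over `𝔽₂`. -/
def trm (A : Fin 4 → R3) (f : MvPolynomial (Fin 4) (ZMod 2)) : K3 :=
  toK3 (aeval A f) / toK3 (∏ i, A i)

/-! Over the common denominator `D = ∏ ρ`, the product of the seven nonzero linear forms, the sum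
becomes `N / D` for an explicit numerator `N`. Each form is `Xᵢ + q` with `q` free of `Xᵢ`, so it
divides a polynomial as soon as the substitution `Xᵢ ↦ q` kills it; the forms are pairwise
non-dividing, hence `D ∣ N` once all seven substitutions kill `N`. Under the substitution for `ρ`
the cofactors of the quadruples not containing `ρ` vanish, while those containing `ρ` pair off:
the two quadruples of a pair agree modulo `ρ` up to a permutation, which a symmetric `f` does not
see, and have the same cofactor modulo `ρ`. In characteristic 2 the pairs cancel. -/

namespace MvPolynomial

variable {σ R : Type*}

theorem X_sub_dvd_of_aeval_update_eq_zero [CommRing R] [DecidableEq σ] (i : σ)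
    (q : MvPolynomial σ R) {p : MvPolynomial σ R} (hp : aeval (Function.update X i q) p = 0) :
    X i - q ∣ p := by
  set I := Ideal.span {X i - q}
  have hmk : (Ideal.Quotient.mkₐ R I).comp (aeval (Function.update X i q)) =
      Ideal.Quotient.mkₐ R I := by
    refine algHom_ext fun j => ?_
    rcases eq_or_ne j i with rfl | hj
    · rw [AlgHom.comp_apply, aeval_X, Function.update_self, Ideal.Quotient.mkₐ_eq_mk,
        Ideal.Quotient.eq, ← neg_sub]
      exact I.neg_mem (Ideal.mem_span_singleton_self _)
    · simp [hj]
  rw [← Ideal.mem_span_singleton, ← Ideal.Quotient.eq_zero_iff_mem, ← Ideal.Quotient.mkₐ_eq_mk R,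
    ← hmk, AlgHom.comp_apply, hp, map_zero]

theorem not_dvd_of_exists_eval [CommSemiring R] {a b : MvPolynomial σ R}
    (h : ∃ v : σ → R, eval v a = 0 ∧ eval v b ≠ 0) : ¬ a ∣ b := by
  rintro ⟨c, rfl⟩
  obtain ⟨v, ha, hb⟩ := h
  simp [ha] at hb

theorem IsSymmetric.map_aeval_eq_of_comp_eq {S T : Type*} [CommSemiring R] [CommSemiring S]
    [CommSemiring T] [Algebra R S] [Algebra R T] {f : MvPolynomial σ R} (hf : f.IsSymmetric)
    (φ : S →ₐ[R] T) {v w : σ → S} (e : Equiv.Perm σ) (h : φ ∘ w = φ ∘ v ∘ e) :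
    φ (aeval w f) = φ (aeval v f) :=
  calc φ (aeval w f) = aeval (φ ∘ w) f := comp_aeval_apply ..
    _ = aeval (φ ∘ v) (rename e f) := by rw [h, aeval_rename]; rfl
    _ = φ (aeval v f) := by rw [hf e, comp_aeval_apply]; rfl

end MvPolynomial

theorem Finset.prod_dvd_of_map_eq_zero {ι A B : Type*} [CommSemiring A] [CommSemiring B]
    [NoZeroDivisors B] [Nontrivial B] {ρ : ι → A} {φ : ι → A →+* B}
    (hker : ∀ i x, φ i x = 0 → ρ i ∣ x) (hsep : Pairwise fun i j => ¬ ρ i ∣ ρ j)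
    (s : Finset ι) {N : A} (hN : ∀ i ∈ s, φ i N = 0) : ∏ i ∈ s, ρ i ∣ N := by
  classical
  induction s using Finset.induction_on with
  | empty => simp
  | insert j s hj ih =>
    obtain ⟨m, rfl⟩ := ih fun i hi => hN i (mem_insert_of_mem hi)
    have hφ : φ j (∏ i ∈ s, ρ i) ≠ 0 := by
      rw [map_prod, prod_ne_zero_iff]
      exact fun i hi h => hsep (ne_of_mem_of_not_mem hi hj).symm (hker j _ h)
    have hm : φ j m = 0 := by
      have hjN := hN j (mem_insert_self j s)
      rw [map_mul] at hjN
      exact (mul_eq_zero.1 hjN).resolve_left hφ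
    rw [prod_insert hj, mul_comm]
    exact mul_dvd_mul_left _ (hker j m hm)

def rho : Fin 7 → R3 := ![r1, r2, r3, r12, r13, r23, r123]

def substVar (i : Fin 3) (q : R3) : R3 →ₐ[ZMod 2] R3 := aeval (Function.update X i q)

@[simp] theorem substVar_X_self (i : Fin 3) (q : R3) : substVar i q (X i) = q := by
  simp [substVar]

@[simp] theorem substVar_X_of_ne {i j : Fin 3} (h : j ≠ i) (q : R3) :
    substVar i q (X j) = X j := by
  simp [substVar, h]

def elimVar : Fin 7 → Fin 3 := ![0, 1, 2, 1, 2, 2, 2]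

def elimVal : Fin 7 → R3 := ![0, 0, 0, X 0, X 0, X 1, X 0 + X 1]

section

attribute [local simp] r1 r2 r3 r12 r13 r23 r123

theorem rho_eq_X_sub (k : Fin 7) : rho k = X (elimVar k) - elimVal k := by
  fin_cases k <;> simp [rho, elimVar, elimVal, CharTwo.sub_eq_add, add_comm]

theorem rho_dvd_of_substVar_eq_zero (k : Fin 7) {x : R3}
    (hx : substVar (elimVar k) (elimVal k) x = 0) : rho k ∣ x :=
  rho_eq_X_sub k ▸ X_sub_dvd_of_aeval_update_eq_zero _ _ hx

theorem rho_pairwise_not_dvd : Pairwise fun k l => ¬ rho k ∣ rho l := by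
  intro k l hkl
  apply not_dvd_of_exists_eval
  fin_cases k <;> fin_cases l <;> simp [rho] at hkl ⊢ <;> decide

theorem prod_rho_ne_zero : ∏ k, rho k ≠ 0 :=
  Finset.prod_ne_zero_iff.2 fun k _ => by
    obtain ⟨l, hl⟩ := exists_ne k
    exact fun h => rho_pairwise_not_dvd hl (h ▸ dvd_zero _)

def numerator (f : MvPolynomial (Fin 4) (ZMod 2)) : R3 :=
  aeval ![r1, r2, r12, r3] f * (r13 * r23 * r123) +
    aeval ![r1, r2, r12, r13] f * (r3 * r23 * r123) +
    aeval ![r1, r2, r12, r23] f * (r3 * r13 * r123) +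
    aeval ![r1, r2, r12, r123] f * (r3 * r13 * r23) +
    aeval ![r3, r13, r23, r123] f * (r1 * r2 * r12)

variable {f : MvPolynomial (Fin 4) (ZMod 2)}

theorem substVar_numerator_r1 (hf : f.IsSymmetric) : substVar 0 0 (numerator f) = 0 := by
  have h₁ := hf.map_aeval_eq_of_comp_eq (substVar 0 0) (v := ![r1, r2, r12, r3])
    (w := ![r1, r2, r12, r13]) 1 (by funext i; fin_cases i <;> simp)
  have h₂ := hf.map_aeval_eq_of_comp_eq (substVar 0 0) (v := ![r1, r2, r12, r23])
    (w := ![r1, r2, r12, r123]) 1 (by funext i; fin_cases i <;> simp)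
  simp only [numerator, map_add, map_mul, h₁, h₂]
  simp
  grind

theorem substVar_numerator_r2 (hf : f.IsSymmetric) : substVar 1 0 (numerator f) = 0 := by
  have h₁ := hf.map_aeval_eq_of_comp_eq (substVar 1 0) (v := ![r1, r2, r12, r3])
    (w := ![r1, r2, r12, r23]) 1 (by funext i; fin_cases i <;> simp)
  have h₂ := hf.map_aeval_eq_of_comp_eq (substVar 1 0) (v := ![r1, r2, r12, r13])
    (w := ![r1, r2, r12, r123]) 1 (by funext i; fin_cases i <;> simp)
  simp only [numerator, map_add, map_mul, h₁, h₂]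
  simp
  grind

theorem substVar_numerator_r3 (hf : f.IsSymmetric) : substVar 2 0 (numerator f) = 0 := by
  have h := hf.map_aeval_eq_of_comp_eq (substVar 2 0) (v := ![r1, r2, r12, r3])
    (w := ![r3, r13, r23, r123]) (finRotate 4).symm (by funext i; fin_cases i <;> simp)
  simp only [numerator, map_add, map_mul, h]
  simp
  grind

theorem substVar_numerator_r12 (hf : f.IsSymmetric) : substVar 1 (X 0) (numerator f) = 0 := by
  have h₁ := hf.map_aeval_eq_of_comp_eq (substVar 1 (X 0)) (v := ![r1, r2, r12, r3])
    (w := ![r1, r2, r12, r123]) 1 (by funext i; fin_cases i <;> simp; grind)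
  have h₂ := hf.map_aeval_eq_of_comp_eq (substVar 1 (X 0)) (v := ![r1, r2, r12, r13])
    (w := ![r1, r2, r12, r23]) 1 (by funext i; fin_cases i <;> simp)
  simp only [numerator, map_add, map_mul, h₁, h₂]
  simp
  grind

theorem substVar_numerator_r13 (hf : f.IsSymmetric) : substVar 2 (X 0) (numerator f) = 0 := by
  have h := hf.map_aeval_eq_of_comp_eq (substVar 2 (X 0)) (v := ![r1, r2, r12, r13])
    (w := ![r3, r13, r23, r123]) (Equiv.swap 1 3)
    (by funext i; fin_cases i <;> simp [Equiv.swap_apply_of_ne_of_ne] <;> grind)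
  simp only [numerator, map_add, map_mul, h]
  simp
  grind

theorem substVar_numerator_r23 (hf : f.IsSymmetric) : substVar 2 (X 1) (numerator f) = 0 := by
  have h := hf.map_aeval_eq_of_comp_eq (substVar 2 (X 1)) (v := ![r1, r2, r12, r23])
    (w := ![r3, r13, r23, r123]) (finRotate 4) (by funext i; fin_cases i <;> simp; grind)
  simp only [numerator, map_add, map_mul, h]
  simp
  grind

theorem substVar_numerator_r123 (hf : f.IsSymmetric) :
    substVar 2 (X 0 + X 1) (numerator f) = 0 := by
  have h := hf.map_aeval_eq_of_comp_eq (substVar 2 (X 0 + X 1)) (v := ![r1, r2, r12, r123])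
    (w := ![r3, r13, r23, r123]) (Equiv.swap 0 2)
    (by funext i; fin_cases i <;> simp [Equiv.swap_apply_of_ne_of_ne] <;> grind)
  simp only [numerator, map_add, map_mul, h]
  simp
  grind

theorem prod_rho_dvd_numerator (hf : f.IsSymmetric) : ∏ k, rho k ∣ numerator f := by
  refine Finset.prod_dvd_of_map_eq_zero
    (φ := fun k => (substVar (elimVar k) (elimVal k) : R3 →+* R3))
    (fun k _ => rho_dvd_of_substVar_eq_zero k) rho_pairwise_not_dvd _ fun k _ => ?_
  fin_cases k
  exacts [substVar_numerator_r1 hf, substVar_numerator_r2 hf, substVar_numerator_r3 hf,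
    substVar_numerator_r12 hf, substVar_numerator_r13 hf, substVar_numerator_r23 hf,
    substVar_numerator_r123 hf]

end

theorem toK3_injective : Function.Injective toK3 := IsFractionRing.injective R3 K3

theorem trm_eq_div {A : Fin 4 → R3} {c : R3} (hc : (∏ i, A i) * c = ∏ k, rho k)
    (f : MvPolynomial (Fin 4) (ZMod 2)) :
    trm A f = toK3 (aeval A f * c) / toK3 (∏ k, rho k) := by
  have hA : toK3 (∏ i, A i) ≠ 0 :=
    (map_ne_zero_iff _ toK3_injective).2 (left_ne_zero_of_mul (hc ▸ prod_rho_ne_zero))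
  rw [trm, div_eq_div_iff hA ((map_ne_zero_iff _ toK3_injective).2 prod_rho_ne_zero), ← map_mul,
    ← map_mul, ← hc]
  congr 1
  ring

theorem sum_trm_eq_numerator_div (f : MvPolynomial (Fin 4) (ZMod 2)) :
    trm ![r1, r2, r12, r3] f + trm ![r1, r2, r12, r13] f + trm ![r1, r2, r12, r23] f +
        trm ![r1, r2, r12, r123] f + trm ![r3, r13, r23, r123] f =
      toK3 (numerator f) / toK3 (∏ k, rho k) := by
  rw [trm_eq_div (c := r13 * r23 * r123), trm_eq_div (c := r3 * r23 * r123),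
    trm_eq_div (c := r3 * r13 * r123), trm_eq_div (c := r3 * r13 * r23),
    trm_eq_div (c := r1 * r2 * r12)]
  · simp only [numerator, map_add, add_div]
  all_goals simp only [Fin.prod_univ_four, Fin.prod_univ_seven, rho]; simp; ring

/-- for the five quadruples `A₁ = (ρ₁,ρ₂,ρ₁₂,ρ₃)`,
`A₂ = (ρ₁,ρ₂,ρ₁₂,ρ₁₃)`, `A₃ = (ρ₁,ρ₂,ρ₁₂,ρ₂₃)`, `A₄ = (ρ₁,ρ₂,ρ₁₂,ρ₁₂₃)`,
`A₅ = (ρ₃,ρ₁₃,ρ₂₃,ρ₁₂₃)` and every symmetric polynomial `f` over `𝔽₂` in 4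
variables, `∑ᵢ f(Aᵢ)/σ₄(Aᵢ)` lies in the image of `R` in `K`. -/
theorem stmt_13 :
    ∀ f : MvPolynomial (Fin 4) (ZMod 2), f.IsSymmetric →
      ∃ r : R3,
        trm ![r1, r2, r12, r3] f + trm ![r1, r2, r12, r13] f +
          trm ![r1, r2, r12, r23] f + trm ![r1, r2, r12, r123] f +
          trm ![r3, r13, r23, r123] f = toK3 r := by
  intro f hf
  obtain ⟨r, hr⟩ := prod_rho_dvd_numerator hf
  refine ⟨r, ?_⟩
  rw [sum_trm_eq_numerator_div, hr, map_mul,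
    mul_div_cancel_left₀ _ ((map_ne_zero_iff _ toK3_injective).2 prod_rho_ne_zero)]

end
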